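/- Preliminary bound for the rank-truncated middle matrix (Proposition 8.4): Let Ũ_k be a best rank-k approximation of Ũ. Writing w = ‖W_{k,I}†‖_F and v = ‖V_{k,J}†‖_F, one has ‖A − C̃ Ũ_k† R̃‖_F ≤ w‖E_I‖_F + v‖E_J‖_F + 4·w·v·‖E_{I,J}‖_F + ‖Ũ_k†‖_F · [ (w‖E_I‖_F + v‖E_J‖_F + w·v·‖E_{I,J}‖_F)·‖E_{I,J}‖_F + ‖E_I‖_F·‖E_J‖_F ]. -/

import Mathlib

open Matrix

noncomputable section

variable {𝕂 : Type} [RCLike 𝕂]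

/-- The Frobenius norm of a matrix. -/
noncomputable def frobNorm {m n : ℕ} (M : Matrix (Fin m) (Fin n) 𝕂) : ℝ :=
  Real.sqrt (∑ i, ∑ j, ‖M i j‖ ^ 2)

/-- The `i`-th largest singular value of a matrix (1-indexed), i.e. the `i`-th largest
square root of an eigenvalue of `Mᴴ * M`. -/
noncomputable def sigma {m n : ℕ} (M : Matrix (Fin m) (Fin n) 𝕂) (i : ℕ) : ℝ :=
  ((List.ofFn fun j : Fin n =>
      Real.sqrt ((Matrix.isHermitian_conjTranspose_mul_self M).eigenvalues j)).insertionSort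
      (· ≥ ·)).getD (i - 1) 0

/-- The spectral norm: the largest singular value. -/
noncomputable def specNorm {m n : ℕ} (M : Matrix (Fin m) (Fin n) 𝕂) : ℝ := sigma M 1

/-- `P` is the Moore–Penrose pseudoinverse of `M`: the four Penrose conditions. -/
def IsMPInv {m n : ℕ} (M : Matrix (Fin m) (Fin n) 𝕂) (P : Matrix (Fin n) (Fin m) 𝕂) : Prop :=
  M * P * M = M ∧ P * M * P = P ∧ (M * P)ᴴ = M * P ∧ (P * M)ᴴ = P * M

/-- `Mr` is a truncated SVD of order `r` of `M`, i.e. a best rank-`r` approximation of `M`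
(equivalently, a matrix obtained from an SVD of `M` by keeping the `r` largest singular
values and zeroing out the rest). -/
def IsTruncSVD {m n : ℕ} (M Mr : Matrix (Fin m) (Fin n) 𝕂) (r : ℕ) : Prop :=
  Mr.rank ≤ r ∧ ∀ B : Matrix (Fin m) (Fin n) 𝕂, B.rank ≤ r → frobNorm (M - Mr) ≤ frobNorm (M - B)

/-- `Mt = [M]_τ`: the matrix obtained from an SVD of `M` by setting to zero every singular
value strictly less than `τ` (i.e. keeping exactly the singular values `≥ τ`). -/
def IsThresh {m n : ℕ} (M Mt : Matrix (Fin m) (Fin n) 𝕂) (τ : ℝ) : Prop :=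
  IsTruncSVD M Mt (Nat.card {i : Fin (min m n) // τ ≤ sigma M ((i : ℕ) + 1)})

/-- The volume of a matrix: the product of its `min p q` largest singular values. -/
noncomputable def vol {p q : ℕ} (M : Matrix (Fin p) (Fin q) 𝕂) : ℝ :=
  ∏ i ∈ Finset.range (min p q), sigma M (i + 1)

end

/-!
Put `Q = W W_I†` and `P = (V_J†)ᴴ Vᴴ`. Since `R = W_I Σ Vᴴ` and `C = W Σ V_Jᴴ` have rank `k`, the
factors `W_I` and `V_J` have full column rank, so `W_I† W_I = 1 = V_J† V_J`; hence `C = Q U`,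
`R = U P` and `A = Q U P`. With `Ũ = U + E_{I,J}` this gives `C̃ = Q Ũ + Ê_J` and `R̃ = Ũ P + Ê_I`
for `Ê_J = E_J - Q E_{I,J}` and `Ê_I = E_I - E_{I,J} P`.

The orthogonal projection `Ũ_k Ũ_k†` maps `Ũ` to `Ũ_k`: otherwise, by Pythagoras, `Ũ_k Ũ_k† Ũ`
would be a strictly better rank-`k` approximation of `Ũ`. The same holds on the right, so
`Ũ Ũ_k† Ũ = Ũ_k`, and the error splits into four terms
`A - C̃ Ũ_k† R̃ = Q (U - Ũ_k) P - Q Ũ_k Ũ_k† Ê_I - Ê_J Ũ_k† Ũ_k P - Ê_J Ũ_k† Ê_I`.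
Each is bounded with `‖Q X‖ ≤ ‖W_I†‖ ‖X‖`, `‖X P‖ ≤ ‖X‖ ‖V_J†‖`, the contractivity of orthogonal
projections, and `‖U - Ũ_k‖ ≤ ‖U - Ũ‖ + ‖Ũ - Ũ_k‖ ≤ 2 ‖E_{I,J}‖`.
-/

section Frobenius

attribute [local instance] Matrix.frobeniusNormedAddCommGroup

variable {𝕂 : Type*} [RCLike 𝕂] {l m n : Type*} [Fintype l] [Fintype m] [Fintype n]

lemma Matrix.frobenius_norm_sq_eq_re_trace (M : Matrix m n 𝕂) :
    ‖M‖ ^ 2 = RCLike.re (Mᴴ * M).trace := by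
  rw [frobenius_norm_def, ← Real.rpow_natCast, ← Real.rpow_mul (by positivity)]
  simp only [trace, diag_apply, mul_apply, conjTranspose_apply, map_sum, RCLike.star_def,
    RCLike.conj_mul, Finset.sum_comm (γ := m)]
  norm_num

lemma Matrix.frobenius_norm_add_sq_of_conjTranspose_mul_eq_zero {X Y : Matrix m n 𝕂}
    (h : Xᴴ * Y = 0) : ‖X + Y‖ ^ 2 = ‖X‖ ^ 2 + ‖Y‖ ^ 2 := by
  have h' : Yᴴ * X = 0 := by
    rw [← conjTranspose_conjTranspose X, ← conjTranspose_mul, h, conjTranspose_zero]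
  simp only [frobenius_norm_sq_eq_re_trace, conjTranspose_add, Matrix.add_mul, Matrix.mul_add, h,
    h', add_zero, zero_add, trace_add, map_add]

lemma IsStarProjection.frobenius_norm_sq_eq {P : Matrix m m 𝕂} (hP : IsStarProjection P)
    (X : Matrix m n 𝕂) : ‖X‖ ^ 2 = ‖P * X‖ ^ 2 + ‖X - P * X‖ ^ 2 := by
  rw [← Matrix.frobenius_norm_add_sq_of_conjTranspose_mul_eq_zero, add_sub_cancel]
  rw [conjTranspose_mul, ← star_eq_conjTranspose, hP.isSelfAdjoint.star_eq, Matrix.mul_assoc,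
    Matrix.mul_sub, ← Matrix.mul_assoc P, hP.isIdempotentElem.eq, sub_self, Matrix.mul_zero]

lemma IsStarProjection.frobenius_norm_mul_le {P : Matrix m m 𝕂} (hP : IsStarProjection P)
    (X : Matrix m n 𝕂) : ‖P * X‖ ≤ ‖X‖ := by
  have := hP.frobenius_norm_sq_eq X
  nlinarith [norm_nonneg (P * X), norm_nonneg X, sq_nonneg ‖X - P * X‖]

lemma IsStarProjection.frobenius_norm_mul_le' {P : Matrix n n 𝕂} (hP : IsStarProjection P)
    (X : Matrix m n 𝕂) : ‖X * P‖ ≤ ‖X‖ := by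
  rw [← Matrix.frobenius_norm_conjTranspose, conjTranspose_mul, ← star_eq_conjTranspose,
    hP.isSelfAdjoint.star_eq, ← Matrix.frobenius_norm_conjTranspose X]
  exact hP.frobenius_norm_mul_le _

lemma Matrix.frobenius_norm_mul_of_conjTranspose_mul_self_eq_one [DecidableEq m]
    {W : Matrix l m 𝕂} (hW : Wᴴ * W = 1) (X : Matrix m n 𝕂) : ‖W * X‖ = ‖X‖ := by
  rw [← sq_eq_sq₀ (norm_nonneg _) (norm_nonneg _), frobenius_norm_sq_eq_re_trace,
    frobenius_norm_sq_eq_re_trace, conjTranspose_mul, Matrix.mul_assoc, ← Matrix.mul_assoc Wᴴ,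
    hW, Matrix.one_mul]

lemma Matrix.frobenius_norm_mul_conjTranspose_of_conjTranspose_mul_self_eq_one [DecidableEq n]
    {V : Matrix l n 𝕂} (hV : Vᴴ * V = 1) (X : Matrix m n 𝕂) : ‖X * Vᴴ‖ = ‖X‖ := by
  rw [← frobenius_norm_conjTranspose, conjTranspose_mul, conjTranspose_conjTranspose,
    frobenius_norm_mul_of_conjTranspose_mul_self_eq_one hV, frobenius_norm_conjTranspose]

end Frobenius

section Rank

variable {K : Type*} [Field K] {m n o : Type*}

lemma Matrix.mul_left_cancel_of_rank_eq_card [Fintype n] {M : Matrix m n K}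
    (hM : M.rank = Fintype.card n) {X Y : Matrix n o K} (h : M * X = M * Y) : X = Y := by
  have hinj : Function.Injective M.mulVec := mulVec_injective_iff.2 <|
    linearIndependent_iff_card_eq_finrank_span.2 <| by rw [← hM, rank_eq_finrank_span_cols]; rfl
  ext i j
  exact congrFun (@hinj (X.col j) (Y.col j) (funext fun r => congrFun (congrFun h r) j)) i

lemma Matrix.rank_eq_of_rank_mul_eq {k : ℕ} [Fintype o] {X : Matrix m (Fin k) K}
    {Y : Matrix (Fin k) o K} (h : (X * Y).rank = k) : X.rank = k :=
  le_antisymm (X.rank_le_card_width.trans_eq (Fintype.card_fin k))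
    (h.symm.trans_le (X.rank_mul_le_left Y))

open scoped ComplexOrder in
lemma Matrix.rank_eq_of_rank_mul_conjTranspose_eq {𝕂 : Type*} [RCLike 𝕂] {k : ℕ} [Fintype m]
    [Fintype o] {X : Matrix m (Fin k) 𝕂} {Y : Matrix o (Fin k) 𝕂} (h : (Y * Xᴴ).rank = k) :
    X.rank = k := by
  refine rank_eq_of_rank_mul_eq (Y := Yᴴ) ?_
  rwa [← conjTranspose_conjTranspose X, ← conjTranspose_mul, rank_conjTranspose]

end Rank

section PseudoInverse

variable {𝕂 : Type} [RCLike 𝕂] {m n : ℕ}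

lemma IsMPInv.isStarProjection_self_mul_pinv {M : Matrix (Fin m) (Fin n) 𝕂}
    {P : Matrix (Fin n) (Fin m) 𝕂} (h : IsMPInv M P) : IsStarProjection (M * P) :=
  ⟨by rw [IsIdempotentElem, ← Matrix.mul_assoc, h.1], h.2.2.1⟩

lemma IsMPInv.isStarProjection_pinv_mul_self {M : Matrix (Fin m) (Fin n) 𝕂}
    {P : Matrix (Fin n) (Fin m) 𝕂} (h : IsMPInv M P) : IsStarProjection (P * M) :=
  ⟨by rw [IsIdempotentElem, ← Matrix.mul_assoc, h.2.1], h.2.2.2⟩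

lemma IsMPInv.conjTranspose {M : Matrix (Fin m) (Fin n) 𝕂} {P : Matrix (Fin n) (Fin m) 𝕂}
    (h : IsMPInv M P) : IsMPInv Mᴴ Pᴴ := by
  obtain ⟨h₁, h₂, h₃, h₄⟩ := h
  refine ⟨?_, ?_, ?_, ?_⟩
  · rw [← conjTranspose_mul, ← conjTranspose_mul, ← Matrix.mul_assoc, h₁]
  · rw [← conjTranspose_mul, ← conjTranspose_mul, ← Matrix.mul_assoc, h₂]
  · rw [← conjTranspose_mul, h₄, h₄]
  · rw [← conjTranspose_mul, h₃, h₃]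

lemma IsMPInv.pinv_mul_self_eq_one {M : Matrix (Fin m) (Fin n) 𝕂}
    {P : Matrix (Fin n) (Fin m) 𝕂} (h : IsMPInv M P) (hM : M.rank = n) : P * M = 1 :=
  Matrix.mul_left_cancel_of_rank_eq_card (by rwa [Fintype.card_fin]) <| by
    rw [← Matrix.mul_assoc, h.1, Matrix.mul_one]

end PseudoInverse

section TruncatedSVD

attribute [local instance] Matrix.frobeniusNormedAddCommGroup

variable {𝕂 : Type} [RCLike 𝕂] {m n r : ℕ} {M Mr : Matrix (Fin m) (Fin n) 𝕂}
  {P : Matrix (Fin n) (Fin m) 𝕂}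

lemma frobNorm_eq_norm (M : Matrix (Fin m) (Fin n) 𝕂) : frobNorm M = ‖M‖ := by
  simp only [frobNorm, Matrix.frobenius_norm_def, Real.sqrt_eq_rpow, Real.rpow_two]

lemma frobNorm_conjTranspose (M : Matrix (Fin m) (Fin n) 𝕂) : frobNorm Mᴴ = frobNorm M := by
  simp only [frobNorm_eq_norm, Matrix.frobenius_norm_conjTranspose]

open scoped ComplexOrder in
lemma IsTruncSVD.conjTranspose (h : IsTruncSVD M Mr r) : IsTruncSVD Mᴴ Mrᴴ r := by
  refine ⟨by rw [Matrix.rank_conjTranspose]; exact h.1, fun B hB => ?_⟩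
  have := h.2 Bᴴ (by rwa [Matrix.rank_conjTranspose])
  rwa [← frobNorm_conjTranspose, ← frobNorm_conjTranspose (M - Bᴴ), conjTranspose_sub,
    conjTranspose_sub, conjTranspose_conjTranspose] at this

lemma IsTruncSVD.mul_pinv_mul_self (h : IsTruncSVD M Mr r) (hP : IsMPInv Mr P) :
    Mr * P * M = Mr := by
  have hbest : ‖M - Mr‖ ≤ ‖M - Mr * P * M‖ := by
    simpa only [frobNorm_eq_norm] using
      h.2 _ ((Matrix.rank_mul_le_left _ _).trans (Matrix.rank_mul_le_left _ _) |>.trans h.1)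
  have hpyth := hP.isStarProjection_self_mul_pinv.frobenius_norm_sq_eq (M - Mr)
  rw [Matrix.mul_sub, hP.1, sub_sub_sub_cancel_right] at hpyth
  have : Mr * P * M - Mr = 0 := by
    rw [← norm_eq_zero]
    nlinarith [norm_nonneg (Mr * P * M - Mr), norm_nonneg (M - Mr)]
  exact sub_eq_zero.1 this

lemma IsTruncSVD.self_mul_pinv_mul (h : IsTruncSVD M Mr r) (hP : IsMPInv Mr P) :
    M * P * Mr = Mr := by
  simpa only [conjTranspose_mul, conjTranspose_conjTranspose, Matrix.mul_assoc] using
    congrArg Matrix.conjTranspose (h.conjTranspose.mul_pinv_mul_self hP.conjTranspose)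

lemma IsTruncSVD.mul_pinv_eq (h : IsTruncSVD M Mr r) (hP : IsMPInv Mr P) : M * P = Mr * P := by
  conv_lhs => rw [← hP.2.1, ← Matrix.mul_assoc, ← Matrix.mul_assoc, h.self_mul_pinv_mul hP]

lemma IsTruncSVD.pinv_mul_eq (h : IsTruncSVD M Mr r) (hP : IsMPInv Mr P) : P * M = P * Mr := by
  conv_lhs => rw [← hP.2.1, Matrix.mul_assoc P Mr P, Matrix.mul_assoc P, h.mul_pinv_mul_self hP]

end TruncatedSVD

lemma cross_approximation_error_eq {α : Type*} [Ring α] {l n p q : Type*} [Fintype p] [Fintype q]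
    {Q : Matrix l p α} {P : Matrix q n α} {U Ut Uk : Matrix p q α} {Ukp : Matrix q p α}
    (hright : Ut * Ukp = Uk * Ukp) (hleft : Ukp * Ut = Ukp * Uk) (hproj : Uk * Ukp * Ut = Uk)
    (EJ : Matrix l q α) (EI : Matrix p n α) :
    Q * U * P - (Q * Ut + EJ) * Ukp * (Ut * P + EI) =
      Q * (U - Uk) * P - Q * (Uk * Ukp) * EI - EJ * (Ukp * Uk) * P - EJ * Ukp * EI := by
  have hmid : Ut * Ukp * Ut = Uk := by rw [hright, hproj]
  have e₁ : Q * Ut * Ukp * (Ut * P) = Q * Uk * P := by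
    rw [Matrix.mul_assoc Q, ← Matrix.mul_assoc, Matrix.mul_assoc Q, hmid]
  have e₂ : Q * Ut * Ukp * EI = Q * (Uk * Ukp) * EI := by rw [Matrix.mul_assoc Q, hright]
  have e₃ : EJ * Ukp * (Ut * P) = EJ * (Ukp * Uk) * P := by
    rw [← Matrix.mul_assoc, Matrix.mul_assoc EJ, hleft]
  rw [Matrix.add_mul, Matrix.add_mul, Matrix.mul_add, Matrix.mul_add, e₁, e₂, e₃,
    Matrix.mul_sub, Matrix.sub_mul]
  abel

section CrossApproximation

attribute [local instance] Matrix.frobeniusNormedAddCommGroup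

variable {𝕂 : Type} [RCLike 𝕂]

theorem frobenius_norm_cross_approximation_error_le {m n k p q r : ℕ}
    {W : Matrix (Fin m) (Fin k) 𝕂} {V : Matrix (Fin n) (Fin k) 𝕂} (hW : Wᴴ * W = 1)
    (hV : Vᴴ * V = 1) (Wp : Matrix (Fin k) (Fin p) 𝕂) (Vp : Matrix (Fin k) (Fin q) 𝕂)
    {U F Uk : Matrix (Fin p) (Fin q) 𝕂} {Ukp : Matrix (Fin q) (Fin p) 𝕂} (hU : U.rank ≤ r)
    (hUk : IsTruncSVD (U + F) Uk r) (hUkp : IsMPInv Uk Ukp)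
    (EJ : Matrix (Fin m) (Fin q) 𝕂) (EI : Matrix (Fin p) (Fin n) 𝕂) :
    ‖W * Wp * U * (Vpᴴ * Vᴴ) - (W * Wp * U + EJ) * Ukp * (U * (Vpᴴ * Vᴴ) + EI)‖ ≤
      ‖Wp‖ * ‖EI‖ + ‖Vp‖ * ‖EJ‖ + 4 * (‖Wp‖ * ‖Vp‖) * ‖F‖ +
        ‖Ukp‖ *
          ((‖Wp‖ * ‖EI‖ + ‖Vp‖ * ‖EJ‖ + ‖Wp‖ * ‖Vp‖ * ‖F‖) * ‖F‖ + ‖EI‖ * ‖EJ‖) := by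
  set Q := W * Wp
  set P := Vpᴴ * Vᴴ
  have hQ {s : ℕ} (X : Matrix (Fin p) (Fin s) 𝕂) : ‖Q * X‖ ≤ ‖Wp‖ * ‖X‖ := by
    rw [Matrix.mul_assoc, frobenius_norm_mul_of_conjTranspose_mul_self_eq_one hW]
    exact frobenius_norm_mul _ _
  have hP {s : ℕ} (X : Matrix (Fin s) (Fin q) 𝕂) : ‖X * P‖ ≤ ‖X‖ * ‖Vp‖ := by
    rw [← Matrix.mul_assoc, frobenius_norm_mul_conjTranspose_of_conjTranspose_mul_self_eq_one hV,
      ← frobenius_norm_conjTranspose Vp]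
    exact frobenius_norm_mul _ _
  have hUUk : ‖U - Uk‖ ≤ 2 * ‖F‖ := by
    have hbest : ‖U + F - Uk‖ ≤ ‖F‖ := by
      simpa only [frobNorm_eq_norm, add_sub_cancel_left] using hUk.2 U hU
    calc ‖U - Uk‖ = ‖-F + (U + F - Uk)‖ := by congr 1; abel
      _ ≤ ‖F‖ + ‖F‖ := (norm_add_le _ _).trans (by rw [norm_neg]; gcongr)
      _ = 2 * ‖F‖ := by ring
  have hJ : ‖EJ - Q * F‖ ≤ ‖EJ‖ + ‖Wp‖ * ‖F‖ :=
    (norm_sub_le _ _).trans (by gcongr; exact hQ F)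
  have hI : ‖EI - F * P‖ ≤ ‖EI‖ + ‖F‖ * ‖Vp‖ :=
    (norm_sub_le _ _).trans (by gcongr; exact hP F)
  rw [show Q * U + EJ = Q * (U + F) + (EJ - Q * F) by rw [Matrix.mul_add]; abel,
    show U * P + EI = (U + F) * P + (EI - F * P) by rw [Matrix.add_mul]; abel,
    cross_approximation_error_eq (hUk.mul_pinv_eq hUkp) (hUk.pinv_mul_eq hUkp)
      (hUk.mul_pinv_mul_self hUkp)]
  set EJ' := EJ - Q * F
  set EI' := EI - F * P
  calc _ ≤ ‖Q * (U - Uk) * P‖ + ‖Q * (Uk * Ukp * EI')‖ + ‖EJ' * (Ukp * Uk) * P‖ +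
        ‖EJ' * Ukp * EI'‖ := by
        rw [← Matrix.mul_assoc Q (Uk * Ukp)]
        refine (norm_sub_le _ _).trans ?_
        gcongr
        refine (norm_sub_le _ _).trans ?_
        gcongr
        exact norm_sub_le _ _
    _ ≤ ‖Wp‖ * (2 * ‖F‖) * ‖Vp‖ + ‖Wp‖ * (‖EI‖ + ‖F‖ * ‖Vp‖) +
        (‖EJ‖ + ‖Wp‖ * ‖F‖) * ‖Vp‖ + (‖EJ‖ + ‖Wp‖ * ‖F‖) * ‖Ukp‖ * (‖EI‖ + ‖F‖ * ‖Vp‖) := by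
      have hUkUkp := hUkp.isStarProjection_self_mul_pinv.frobenius_norm_mul_le EI'
      have hUkpUk := hUkp.isStarProjection_pinv_mul_self.frobenius_norm_mul_le' EJ'
      gcongr
      · exact (hP _).trans (by gcongr; exact (hQ _).trans (by gcongr))
      · exact (hQ _).trans (by gcongr; exact hUkUkp.trans hI)
      · exact (hP _).trans (by gcongr; exact hUkpUk.trans hJ)
      · refine (Matrix.frobenius_norm_mul _ _).trans ?_
        gcongr
        exact (Matrix.frobenius_norm_mul _ _).trans (by gcongr)
    _ = _ := by ring

end CrossApproximation

section Factorization

variable {α : Type*} [Ring α] [StarRing α] {l m n k p q : Type*} [Fintype k] [Fintype l]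
  {W : Matrix m k α} {D : Matrix k l α} {V : Matrix n l α}

lemma Matrix.submatrix_mul_mul_conjTranspose (r : p → m) (c : q → n) :
    (W * D * Vᴴ).submatrix r c = W.submatrix r id * D * (V.submatrix c id)ᴴ := by
  rw [submatrix_mul _ _ r id c Function.bijective_id,
    submatrix_mul _ _ r id id Function.bijective_id, submatrix_id_id, conjTranspose_submatrix]

variable {Wp : Matrix k p α} {Vp : Matrix l q α} {r : p → m} {c : q → n}

lemma Matrix.submatrix_id_eq_mul_submatrix [DecidableEq k] [Fintype p]
    (hW : Wp * W.submatrix r id = 1) :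
    (W * D * Vᴴ).submatrix id c = W * Wp * (W * D * Vᴴ).submatrix r c := by
  have hW' (X : Matrix k q α) : Wp * (W.submatrix r id * X) = X := by
    rw [← Matrix.mul_assoc, hW, Matrix.one_mul]
  rw [submatrix_mul_mul_conjTranspose, submatrix_mul_mul_conjTranspose, submatrix_id_id]
  simp only [Matrix.mul_assoc, hW']

lemma Matrix.conjTranspose_submatrix_mul_conjTranspose [DecidableEq l] [Fintype q]
    (hV : Vp * V.submatrix c id = 1) (X : Matrix l n α) :
    (V.submatrix c id)ᴴ * (Vpᴴ * X) = X := by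
  rw [← Matrix.mul_assoc, ← conjTranspose_mul, hV, conjTranspose_one, Matrix.one_mul]

lemma Matrix.submatrix_eq_submatrix_mul [DecidableEq l] [Fintype q]
    (hV : Vp * V.submatrix c id = 1) :
    (W * D * Vᴴ).submatrix r id = (W * D * Vᴴ).submatrix r c * (Vpᴴ * Vᴴ) := by
  rw [submatrix_mul_mul_conjTranspose, submatrix_mul_mul_conjTranspose, submatrix_id_id]
  simp only [Matrix.mul_assoc, conjTranspose_submatrix_mul_conjTranspose hV]

lemma Matrix.eq_mul_submatrix_mul [DecidableEq k] [DecidableEq l] [Fintype p] [Fintype q]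
    (hW : Wp * W.submatrix r id = 1) (hV : Vp * V.submatrix c id = 1) :
    W * D * Vᴴ = W * Wp * (W * D * Vᴴ).submatrix r c * (Vpᴴ * Vᴴ) := by
  rw [← submatrix_id_eq_mul_submatrix hW, submatrix_mul_mul_conjTranspose, submatrix_id_id]
  simp only [Matrix.mul_assoc, conjTranspose_submatrix_mul_conjTranspose hV]

end Factorization

section FullRank

variable {𝕂 : Type*} [RCLike 𝕂] {m n p q : Type*} {s : ℕ}
  {W : Matrix m (Fin s) 𝕂} {D : Matrix (Fin s) (Fin s) 𝕂} {V : Matrix n (Fin s) 𝕂}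

lemma Matrix.rank_submatrix_left_factor_eq [Fintype n] {r : p → m}
    (h : ((W * D * Vᴴ).submatrix r id).rank = s) : (W.submatrix r id).rank = s := by
  rw [submatrix_mul_mul_conjTranspose, Matrix.mul_assoc] at h
  exact rank_eq_of_rank_mul_eq h

lemma Matrix.rank_submatrix_right_factor_eq [Fintype m] [Fintype q] {c : q → n}
    (h : ((W * D * Vᴴ).submatrix id c).rank = s) : (V.submatrix c id).rank = s := by
  rw [submatrix_mul_mul_conjTranspose] at h
  exact rank_eq_of_rank_mul_conjTranspose_eq h

end FullRank

theorem rank_truncated_middle_preliminary_general {𝕂 : Type} [RCLike 𝕂] {m n k p q : ℕ}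
    (A E : Matrix (Fin m) (Fin n) 𝕂)
    (ι : Fin p ↪ Fin m) (κ : Fin q ↪ Fin n)
    (hrankC : (A.submatrix id ⇑κ).rank = k)
    (hrankU : (A.submatrix ⇑ι ⇑κ).rank = k)
    (hrankR : (A.submatrix ⇑ι id).rank = k)
    (W : Matrix (Fin m) (Fin k) 𝕂) (V : Matrix (Fin n) (Fin k) 𝕂) (d : Fin k → ℝ)
    (hW : Wᴴ * W = 1) (hV : Vᴴ * V = 1)
    (hSVD : A = W * Matrix.diagonal (fun i => (d i : 𝕂)) * Vᴴ)
    (Wp : Matrix (Fin k) (Fin p) 𝕂) (hWp : IsMPInv (W.submatrix ⇑ι id) Wp)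
    (Vp : Matrix (Fin k) (Fin q) 𝕂) (hVp : IsMPInv (V.submatrix ⇑κ id) Vp)
    (Uk : Matrix (Fin p) (Fin q) 𝕂) (hUk : IsTruncSVD ((A + E).submatrix ⇑ι ⇑κ) Uk k)
    (Ukp : Matrix (Fin q) (Fin p) 𝕂) (hUkp : IsMPInv Uk Ukp) :
    frobNorm (A - (A + E).submatrix id ⇑κ * Ukp * (A + E).submatrix ⇑ι id) ≤
      frobNorm Wp * frobNorm (E.submatrix ⇑ι id) + frobNorm Vp * frobNorm (E.submatrix id ⇑κ) +
        4 * (frobNorm Wp * frobNorm Vp) * frobNorm (E.submatrix ⇑ι ⇑κ) +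
        frobNorm Ukp *
          ((frobNorm Wp * frobNorm (E.submatrix ⇑ι id) +
              frobNorm Vp * frobNorm (E.submatrix id ⇑κ) +
              frobNorm Wp * frobNorm Vp * frobNorm (E.submatrix ⇑ι ⇑κ)) *
              frobNorm (E.submatrix ⇑ι ⇑κ) +
            frobNorm (E.submatrix ⇑ι id) * frobNorm (E.submatrix id ⇑κ)) := by
  subst hSVD
  have hWI := hWp.pinv_mul_self_eq_one (Matrix.rank_submatrix_left_factor_eq hrankR)
  have hVJ := hVp.pinv_mul_self_eq_one (Matrix.rank_submatrix_right_factor_eq hrankC)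
  have key := frobenius_norm_cross_approximation_error_le hW hV Wp Vp hrankU.le
    (F := E.submatrix ι κ) hUk hUkp (E.submatrix id κ) (E.submatrix ι id)
  rw [← Matrix.eq_mul_submatrix_mul hWI hVJ, ← Matrix.submatrix_id_eq_mul_submatrix hWI,
    ← Matrix.submatrix_eq_submatrix_mul hVJ] at key
  simp only [frobNorm_eq_norm]
  exact key

/-- Proposition 8.4: preliminary bound for the rank-truncated middle matrix. -/
theorem rank_truncated_middle_preliminary {𝕂 : Type} [RCLike 𝕂] {m n k p q : ℕ}
    (A E : Matrix (Fin m) (Fin n) 𝕂)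
    (hrankA : A.rank = k)
    (ι : Fin p ↪ Fin m) (κ : Fin q ↪ Fin n)
    (hrankC : (A.submatrix id ⇑κ).rank = k)
    (hrankU : (A.submatrix ⇑ι ⇑κ).rank = k)
    (hrankR : (A.submatrix ⇑ι id).rank = k)
    (W : Matrix (Fin m) (Fin k) 𝕂) (V : Matrix (Fin n) (Fin k) 𝕂) (d : Fin k → ℝ)
    (hW : Wᴴ * W = 1) (hV : Vᴴ * V = 1)
    (hmono : ∀ i j : Fin k, i ≤ j → d j ≤ d i) (hpos : ∀ i, 0 < d i)
    (hSVD : A = W * Matrix.diagonal (fun i => (d i : 𝕂)) * Vᴴ)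
    (Wp : Matrix (Fin k) (Fin p) 𝕂) (hWp : IsMPInv (W.submatrix ⇑ι id) Wp)
    (Vp : Matrix (Fin k) (Fin q) 𝕂) (hVp : IsMPInv (V.submatrix ⇑κ id) Vp)
    (Uk : Matrix (Fin p) (Fin q) 𝕂) (hUk : IsTruncSVD ((A + E).submatrix ⇑ι ⇑κ) Uk k)
    (Ukp : Matrix (Fin q) (Fin p) 𝕂) (hUkp : IsMPInv Uk Ukp) :
    frobNorm (A - (A + E).submatrix id ⇑κ * Ukp * (A + E).submatrix ⇑ι id) ≤
      frobNorm Wp * frobNorm (E.submatrix ⇑ι id) + frobNorm Vp * frobNorm (E.submatrix id ⇑κ) +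
        4 * (frobNorm Wp * frobNorm Vp) * frobNorm (E.submatrix ⇑ι ⇑κ) +
        frobNorm Ukp *
          ((frobNorm Wp * frobNorm (E.submatrix ⇑ι id) +
              frobNorm Vp * frobNorm (E.submatrix id ⇑κ) +
              frobNorm Wp * frobNorm Vp * frobNorm (E.submatrix ⇑ι ⇑κ)) *
              frobNorm (E.submatrix ⇑ι ⇑κ) +
            frobNorm (E.submatrix ⇑ι id) * frobNorm (E.submatrix id ⇑κ)) :=
  rank_truncated_middle_preliminary_general A E ι κ hrankC hrankU hrankR W V d hW hV hSVD Wp hWp Vp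
    hVp Uk hUk Ukp hUkp
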